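/- arXiv:2204.01143 — 2 statements merged into one kernel-verified Lean document; each statement's English description precedes it below -/
import Mathlib

section
/- For every natural number N ≥ 1, the natural logarithm ln(N) is a primitive-recursively computable real number: there exists a primitive recursive function A : ℕ → ℚ such that for all x ∈ ℕ, |A(x) − ln(N)| ≤ 1/(x+1). -/
/-!
With `r = 1 - 1/N` we have `log N = -log (1 - r) = ∑ r ^ k / k`, and since
`r ^ m ≤ 1 / (1 + m / N)` the tail after `n` terms is at most `N ^ 2 / (n + 1)`, so
`N ^ 2 (x + 1)` terms give accuracy `1 / (x + 1)`. Over a common denominator the partial sum is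
a quotient of two natural numbers built from powers, factorials and finite sums, hence
primitive recursive in `x`.
-/

/-- A real number is primitive-recursively computable if some primitive recursive
sequence of rationals approximates it with error at most `1/(x+1)`. -/
def IsPrimrecReal (a : ℝ) : Prop :=
  ∃ A : ℕ → ℚ, Primrec A ∧ ∀ x : ℕ, |(A x : ℝ) - a| ≤ 1 / ((x : ℝ) + 1)

open Encodable Finset
open scoped Nat

attribute [local instance] Encodable.decidableRangeEncode

namespace Primrec

variable {α : Type*} [Primcodable α]

theorem nat_pow : Primrec₂ ((· ^ ·) : ℕ → ℕ → ℕ) :=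
  Primrec₂.unpaired'.1 Nat.Primrec.pow

theorem nat_factorial : Primrec Nat.factorial :=
  (nat_rec₁ 1 (nat_mul.comp₂ (succ.comp₂ Primrec₂.left) Primrec₂.right)).of_eq fun n => by
    induction n with
    | zero => rfl
    | succ n ih => simp [Nat.factorial_succ, ← ih]

theorem nat_sum_range {f : α → ℕ} {g : α → ℕ → ℕ} (hf : Primrec f) (hg : Primrec₂ g) :
    Primrec fun a => ∑ i ∈ range (f a), g a i := by
  refine (nat_rec' hf (const 0) (nat_add.comp (snd.comp snd) (hg.comp fst (fst.comp snd))).to₂ :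
    Primrec fun a => Nat.rec (motive := fun _ => ℕ) 0 (fun i s => s + g a i) (f a)).of_eq
      fun a => ?_
  induction f a with
  | zero => rfl
  | succ n ih => rw [sum_range_succ, ← ih]

theorem nat_count {p : ℕ → Prop} [DecidablePred p] (hp : PrimrecPred p) :
    Primrec (Nat.count p) :=
  (list_length.comp ((listFilter hp).comp list_range)).of_eq fun n => by
    simp [Nat.count, List.countP_eq_length_filter]

theorem nat_dvd : PrimrecRel ((· ∣ ·) : ℕ → ℕ → Prop) :=
  (Primrec.eq.comp (nat_mod.comp snd fst) (const 0)).of_eq fun _ => Nat.dvd_iff_mod_eq_zero.symm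

theorem _root_.Nat.gcd_eq_findGreatest (a b : ℕ) :
    Nat.gcd a b = Nat.findGreatest (fun k => k ∣ a ∧ k ∣ b) (a + b) := by
  refine (Nat.findGreatest_eq_iff.2 ⟨?_, fun _ => ⟨Nat.gcd_dvd_left a b, Nat.gcd_dvd_right a b⟩,
    fun k hlt hle ⟨hka, hkb⟩ => ?_⟩).symm
  · rcases Nat.eq_zero_or_pos a with rfl | ha
    · simp
    · exact (Nat.gcd_le_left b ha).trans (Nat.le_add_right a b)
  · rcases Nat.eq_zero_or_pos (Nat.gcd a b) with h0 | h0
    · rw [Nat.gcd_eq_zero_iff] at h0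
      omega
    · exact hlt.not_ge (Nat.le_of_dvd h0 (Nat.dvd_gcd hka hkb))

theorem nat_gcd : Primrec₂ Nat.gcd := by
  have hdvd : PrimrecRel fun (p : ℕ × ℕ) k => k ∣ p.1 ∧ k ∣ p.2 :=
    (nat_dvd.comp snd (fst.comp fst)).and (nat_dvd.comp snd (snd.comp fst))
  exact (nat_findGreatest (nat_add.comp fst snd) hdvd).of_eq
    fun p => (Nat.gcd_eq_findGreatest p.1 p.2).symm

end Primrec

theorem Int.natAbs_eq_encode_add_one_div_two (z : ℤ) : z.natAbs = (encode z + 1) / 2 := by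
  rcases z with n | n
  · change n = (2 * n + 1) / 2
    omega
  · change n + 1 = (2 * n + 1 + 1) / 2
    omega

namespace Rat

theorem encode_eq_pair (q : ℚ) : encode q = Nat.pair (encode q.num) q.den := rfl

theorem mem_range_encode_iff (m : ℕ) :
    m ∈ Set.range (encode : ℚ → ℕ) ↔
      m.unpair.2 ≠ 0 ∧ ((m.unpair.1 + 1) / 2).Coprime m.unpair.2 := by
  constructor
  · rintro ⟨q, rfl⟩
    rw [encode_eq_pair, Nat.unpair_pair, ← Int.natAbs_eq_encode_add_one_div_two]
    exact ⟨q.den_nz, q.reduced⟩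
  · rintro ⟨hden, hcop⟩
    have hnum := Int.natAbs_eq_encode_add_one_div_two (Denumerable.ofNat ℤ m.unpair.1)
    rw [Denumerable.encode_ofNat] at hnum
    refine ⟨⟨Denumerable.ofNat ℤ m.unpair.1, m.unpair.2, hden, hnum ▸ hcop⟩, ?_⟩
    change Nat.pair (encode (Denumerable.ofNat ℤ m.unpair.1)) m.unpair.2 = m
    rw [Denumerable.encode_ofNat, Nat.pair_unpair]

theorem encode_natCast_div (a b : ℕ) (hb : b ≠ 0) :
    encode ((a : ℚ) / b) = Nat.pair (2 * (a / a.gcd b)) (b / a.gcd b) := by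
  have hsign : (b : ℤ).sign = 1 := Int.sign_eq_one_of_pos (by omega)
  have hnum : ((a : ℚ) / b).num = ((a / a.gcd b : ℕ) : ℤ) := by
    rw [natCast_div_eq_divInt, num_divInt, hsign, one_mul, Int.gcd_natCast_natCast,
      Nat.gcd_comm, Int.natCast_div]
  have hden : ((a : ℚ) / b).den = b / a.gcd b := by
    rw [natCast_div_eq_divInt, den_divInt, if_neg (by omega), Int.gcd_natCast_natCast,
      Nat.gcd_comm, Int.natAbs_natCast]
  rw [encode_eq_pair, hnum, hden]
  rfl

open Primrec in
theorem primrecPred_mem_range_encode : PrimrecPred (· ∈ Set.range (encode : ℚ → ℕ)) := by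
  have hden : Primrec fun m : ℕ => m.unpair.2 := snd.comp unpair
  have hnum : Primrec fun m : ℕ => (m.unpair.1 + 1) / 2 :=
    nat_div.comp (succ.comp (fst.comp unpair)) (const 2)
  exact ((Primrec.eq.comp hden (const 0)).not.and
    (Primrec.eq.comp (nat_gcd.comp hnum hden) (const 1))).of_eq
    fun m => (mem_range_encode_iff m).symm

end Rat

namespace Primrec

variable {α : Type*} [Primcodable α]

/-- `encode` is the standard code `Nat.pair (encode q.num) q.den`, whereas `Primcodable ℚ`
comes from `Denumerable ℚ` and codes `q` by the number of standard codes below that of `q`. -/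
theorem rat_of_encode {f : α → ℚ} (hf : Primrec fun a => encode (f a)) : Primrec f :=
  encode_iff.1 ((nat_count Rat.primrecPred_mem_range_encode).comp hf)

theorem rat_natCast_div : Primrec₂ fun a b : ℕ => (a / b : ℚ) := by
  have hg : Primrec fun p : ℕ × ℕ => p.1.gcd p.2 := nat_gcd.comp fst snd
  have hreduced : Primrec fun p : ℕ × ℕ =>
      Nat.pair (2 * (p.1 / p.1.gcd p.2)) (p.2 / p.1.gcd p.2) :=
    Primrec₂.natPair.comp (nat_double.comp (nat_div.comp fst hg)) (nat_div.comp snd hg)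
  refine rat_of_encode ((ite (Primrec.eq.comp snd (const 0)) (const (encode (0 : ℚ)))
    hreduced).of_eq fun p => ?_)
  split_ifs with hb
  · simp [hb]
  · exact (Rat.encode_natCast_div p.1 p.2 hb).symm

end Primrec

theorem one_sub_pow_le_inv_one_add_mul {t : ℝ} (h0 : 0 ≤ t) (h1 : t ≤ 1) (m : ℕ) :
    (1 - t) ^ m ≤ (1 + m * t)⁻¹ :=
  calc (1 - t) ^ m ≤ Real.exp (-t) ^ m :=
        pow_le_pow_left₀ (by linarith) (Real.one_sub_le_exp_neg t) m
    _ = (Real.exp (m * t))⁻¹ := by rw [← Real.exp_nat_mul, ← Real.exp_neg, mul_neg]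
    _ ≤ (1 + m * t)⁻¹ := inv_anti₀ (by positivity) (by linarith [Real.add_one_le_exp (m * t)])

/-- The `n`-th partial sum of `-log (1 - r) = ∑ r ^ k / k` at `r = 1 - 1 / N`. -/
def logApprox (N n : ℕ) : ℚ :=
  ∑ i ∈ range n, (1 - (N : ℚ)⁻¹) ^ (i + 1) / (i + 1)

theorem logApprox_eq_div {N : ℕ} (hN : 0 < N) (n : ℕ) :
    logApprox N n =
      ((∑ i ∈ range n, (N - 1) ^ (i + 1) * N ^ (n - (i + 1)) * (n ! / (i + 1)) : ℕ) : ℚ) /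
        (N ^ n * n ! : ℕ) := by
  rw [Nat.cast_sum, sum_div, logApprox]
  refine sum_congr rfl fun i hi => ?_
  have hi : i + 1 ≤ n := mem_range.1 hi
  have hN' : (N : ℚ) ≠ 0 := by positivity
  rw [Nat.cast_mul, Nat.cast_mul, Nat.cast_div (Nat.dvd_factorial i.succ_pos hi) (by positivity),
    Nat.cast_mul, Nat.cast_pow, Nat.cast_pow, Nat.cast_pow, Nat.cast_sub hN,
    ← pow_mul_pow_sub _ hi]
  push_cast
  field_simp
  rw [div_pow, div_mul_cancel₀ _ (pow_ne_zero _ hN')]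

open Primrec in
theorem primrec_logApprox {N : ℕ} (hN : 0 < N) : Primrec (logApprox N) := by
  have hterm : Primrec fun p : ℕ × ℕ =>
      (N - 1) ^ (p.2 + 1) * N ^ (p.1 - (p.2 + 1)) * (p.1 ! / (p.2 + 1)) :=
    nat_mul.comp
      (nat_mul.comp (nat_pow.comp (const _) (succ.comp snd))
        (nat_pow.comp (const _) (nat_sub.comp fst (succ.comp snd))))
      (nat_div.comp (nat_factorial.comp fst) (succ.comp snd))
  have hden : Primrec fun n => N ^ n * n ! :=
    nat_mul.comp (nat_pow.comp (const N) .id) nat_factorial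
  exact (rat_natCast_div.comp (nat_sum_range .id hterm.to₂) hden).of_eq
    fun n => (logApprox_eq_div hN n).symm

theorem abs_logApprox_sub_log_le {N : ℕ} (hN : 0 < N) (n : ℕ) :
    |(logApprox N n : ℝ) - Real.log N| ≤ N ^ 2 / (n + 1) := by
  set r : ℝ := 1 - (N : ℝ)⁻¹ with hr
  have hN1 : (1 : ℝ) ≤ N := by exact_mod_cast hN
  have hinv0 : 0 < (N : ℝ)⁻¹ := by positivity
  have hinv1 : (N : ℝ)⁻¹ ≤ 1 := inv_le_one_of_one_le₀ hN1
  have hr0 : 0 ≤ r := by linarith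
  have hsum : (logApprox N n : ℝ) = ∑ i ∈ range n, r ^ (i + 1) / (i + 1) := by
    simp [logApprox, hr]
  have hseries :=
    Real.abs_log_sub_add_sum_range_le (x := r) (by rw [abs_of_nonneg hr0]; linarith) n
  rw [abs_of_nonneg hr0, hr, sub_sub_cancel, Real.log_inv, ← sub_eq_add_neg, ← hr,
    ← hsum] at hseries
  have hpow : r ^ (n + 1) ≤ N / (N + (n + 1)) :=
    calc r ^ (n + 1) ≤ (1 + ((n + 1 : ℕ) : ℝ) * (N : ℝ)⁻¹)⁻¹ :=
          one_sub_pow_le_inv_one_add_mul hinv0.le hinv1 (n + 1)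
      _ = N / (N + (n + 1)) := by field_simp; push_cast; ring
  calc _ ≤ r ^ (n + 1) / (N : ℝ)⁻¹ := hseries
    _ ≤ N / (N + (n + 1)) * N := by rw [div_inv_eq_mul]; gcongr
    _ ≤ N ^ 2 / (n + 1) := by
      rw [div_mul_eq_mul_div, ← sq]
      exact div_le_div_of_nonneg_left (by positivity) (by positivity) (by linarith)

theorem primrecReal_log_nat (N : ℕ) (hN : 1 ≤ N) :
    IsPrimrecReal (Real.log N) := by
  refine ⟨fun x => logApprox N (N ^ 2 * (x + 1)),
    (primrec_logApprox hN).comp (Primrec.nat_mul.comp (Primrec.const _) Primrec.succ),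
    fun x => (abs_logApprox_sub_log_le hN _).trans ?_⟩
  have hN2 : (0 : ℝ) < (N : ℝ) ^ 2 := by positivity
  rw [div_le_div_iff₀ (by positivity) (by positivity)]
  push_cast
  nlinarith
end

section
/- A real number α is computable if and only if α has a primitive recursive approximation, i.e., if and only if there exist primitive recursive functions A : ℕ → ℚ and E : ℕ → ℚ such that E is monotonically decreasing, E(x) tends to 0 as x → ∞, and for all x ∈ ℕ, |A(x) − α| ≤ E(x). -/
/-- A real number is computable if some computable sequence of rationals
approximates it with error at most `1/(x+1)`. -/
def IsComputableReal (a : ℝ) : Prop :=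
  ∃ A : ℕ → ℚ, Computable A ∧ ∀ x : ℕ, |(A x : ℝ) - a| ≤ 1 / ((x : ℝ) + 1)

/-!
Forward direction: run a program for the computable approximation `A` with a step budget. At
stage `s` take the largest input `m s ≤ s` on which the program halts within `s` steps; then
`s ↦ A (m s)` is primitive recursive, and since `m` is monotone and unbounded, the errors
`1 / (m s + 1)` decrease to `0`. Backward direction: to approximate within `1 / (x + 1)`, search
for the first `n` with `E n ≤ 1 / (x + 1)` and output `A n`.

Arithmetic on `ℚ` is done on the raw codes `Nat.pair (encode q.num) q.den`, which the
`Primcodable ℚ` instance numbers in increasing order: turning a raw code into a `Primcodable` code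
counts the smaller raw codes (primitive recursive), and the converse is an unbounded search
(computable).
-/

open Encodable Filter Topology Nat.Partrec

theorem Nat.coprime_iff_forall_lt_dvd {a b : ℕ} :
    a.Coprime b ↔ ∀ d < a + b + 1, d ∣ a → d ∣ b → d = 1 := by
  refine ⟨fun h d _ hda hdb => Nat.eq_one_of_dvd_coprimes h hda hdb, fun h => ?_⟩
  have hgcd : a.gcd b < a + b + 1 := by
    rcases a.eq_zero_or_pos with rfl | ha
    · simp
    · have := Nat.gcd_le_left b ha
      omega
  exact h _ hgcd (Nat.gcd_dvd_left a b) (Nat.gcd_dvd_right a b)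

theorem PrimrecRel.nat_dvd : PrimrecRel ((· ∣ ·) : ℕ → ℕ → Prop) :=
  (Primrec.eq.comp (Primrec.nat_mod.comp Primrec.snd Primrec.fst) (Primrec.const 0)).of_eq
    fun _ => Nat.dvd_iff_mod_eq_zero.symm

theorem PrimrecRel.nat_coprime : PrimrecRel Nat.Coprime := by
  have hdiv : PrimrecRel fun (d : ℕ) (ab : ℕ × ℕ) => d ∣ ab.1 → d ∣ ab.2 → d = 1 :=
    (PrimrecPred.or (PrimrecRel.nat_dvd.comp Primrec.fst (Primrec.fst.comp Primrec.snd)).not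
      (PrimrecPred.or (PrimrecRel.nat_dvd.comp Primrec.fst (Primrec.snd.comp Primrec.snd)).not
        (Primrec.eq.comp Primrec.fst (Primrec.const 1)))).of_eq fun _ => by tauto
  refine (PrimrecRel.comp hdiv.forall_mem_list
    (Primrec.list_range.comp (Primrec.succ.comp (Primrec.nat_add.comp Primrec.fst Primrec.snd)))
    Primrec.id).of_eq fun ab => ?_
  simp only [List.mem_range, Nat.coprime_iff_forall_lt_dvd, Nat.succ_eq_add_one, id]

theorem Primrec.nat_count_s16 {p : ℕ → Prop} [DecidablePred p] (hp : PrimrecPred p) :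
    Primrec (Nat.count p) :=
  (Primrec.list_length.comp ((Primrec.listFilter hp).comp Primrec.list_range)).of_eq
    fun _ => (List.countP_eq_length_filter ..).symm

theorem Computable.nat_find {α : Type*} [Primcodable α] {p : α → ℕ → Prop}
    [∀ a, DecidablePred (p a)] (hp : Computable₂ fun a n => decide (p a n))
    (h : ∀ a, ∃ n, p a n) : Computable fun a => Nat.find (h a) := by
  refine (Partrec.rfind hp.partrec₂).of_eq_tot fun a => Nat.mem_rfind.2 ⟨?_, fun hm => ?_⟩
  · simpa using Nat.find_spec (h a)
  · simpa using Nat.find_min (h a) hm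

theorem Computable.exists_primrec_comp_tendsto_atTop {σ : Type*} [Primcodable σ] {f : ℕ → σ}
    (hf : Computable f) :
    ∃ m : ℕ → ℕ, Primrec m ∧ Monotone m ∧ Tendsto m atTop atTop ∧ Primrec (f ∘ m) := by
  obtain ⟨c, hc⟩ := Code.exists_code.1 (Partrec.nat_iff.1 (Computable.encode.comp hf))
  have hmem : ∀ {s k v}, v ∈ Code.evaln s c k → v = encode (f k) := fun hv => by
    simpa [hc] using Code.evaln_sound hv
  -- `m s` is the largest input at most `s` on which `c` halts within `s` steps, or `0`; in the
  -- latter case the default value `f 0` is still correct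
  let halts (s k : ℕ) : Prop := (Code.evaln s c k).isSome
  let m (s : ℕ) : ℕ := Nat.findGreatest (halts s) s
  have hhalts : PrimrecRel halts :=
    (Primrec.eq.comp (Primrec.option_isSome.comp (Code.primrec_evaln.comp
      (Primrec.pair (Primrec.pair Primrec.fst (Primrec.const c)) Primrec.snd)))
      (Primrec.const true)).of_eq fun _ => Iff.rfl
  refine ⟨m, Primrec.nat_findGreatest Primrec.id hhalts, fun s t hst => ?_, ?_, ?_⟩
  · refine Nat.findGreatest_mono (fun k hk => ?_) hst
    obtain ⟨v, hv⟩ := Option.isSome_iff_exists.1 hk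
    exact Option.isSome_iff_exists.2 ⟨v, Code.evaln_mono hst hv⟩
  · refine tendsto_atTop.2 fun k => ?_
    obtain ⟨K, hK⟩ := Code.evaln_complete.1 (show encode (f k) ∈ c.eval k by simp [hc])
    refine eventually_atTop.2 ⟨max K k, fun s hs => Nat.le_findGreatest (le_of_max_le_right hs) ?_⟩
    exact Option.isSome_iff_exists.2 ⟨_, Code.evaln_mono (le_of_max_le_left hs) hK⟩
  · have hrun : Primrec fun s => Code.evaln s c (m s) :=
      Code.primrec_evaln.comp (Primrec.pair (Primrec.pair Primrec.id (Primrec.const c))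
        (Primrec.nat_findGreatest Primrec.id hhalts))
    refine (Primrec.option_getD.comp (Primrec.option_bind hrun
      (Primrec.decode.comp Primrec.snd).to₂) (Primrec.const (f 0))).of_eq fun s => ?_
    cases hs : Code.evaln s c (m s) with
    | some v => simp [hmem hs]
    | none =>
      have : m s = 0 := by
        by_contra h0
        simpa [halts, hs] using Nat.findGreatest_of_ne_zero (P := halts s) (rfl : m s = m s) h0
      simp [this]

theorem Int.encode_add_one_div_two (z : ℤ) : (encode z + 1) / 2 = z.natAbs := by
  rcases z with n | n
  · change (2 * n + 1) / 2 = n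
    omega
  · change (2 * n + 1 + 1) / 2 = n + 1
    omega

theorem Int.toNat_eq_ite_encode (z : ℤ) :
    z.toNat = if encode z % 2 = 0 then encode z / 2 else 0 := by
  rcases z with n | n
  · change n = if 2 * n % 2 = 0 then 2 * n / 2 else 0
    simp
  · change 0 = if (2 * n + 1) % 2 = 0 then (2 * n + 1) / 2 else 0
    simp [Nat.add_mod]

namespace Rat

/-- The code of `q` under `Rat.instEncodable`, which is what `encode q` elaborates to. The
`Primcodable ℚ` instance encodes with `instDenumerable` instead, numbering the range of `rawCode`
in increasing order. -/
def rawCode (q : ℚ) : ℕ := Nat.pair (encode q.num) q.den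

def IsRawCode (m : ℕ) : Prop := m.unpair.2 ≠ 0 ∧ ((m.unpair.1 + 1) / 2).Coprime m.unpair.2

instance : DecidablePred IsRawCode := fun _ => by unfold IsRawCode; infer_instance

theorem isRawCode_iff_mem_range {m : ℕ} : IsRawCode m ↔ m ∈ Set.range rawCode := by
  constructor
  · rintro ⟨hden, hcop⟩
    obtain ⟨z, hz⟩ : ∃ z : ℤ, encode z = m.unpair.1 :=
      ⟨Denumerable.ofNat ℤ m.unpair.1, Denumerable.encode_ofNat _⟩
    rw [← hz, Int.encode_add_one_div_two] at hcop
    refine ⟨⟨z, m.unpair.2, hden, hcop⟩, ?_⟩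
    simp [rawCode, hz]
  · rintro ⟨q, rfl⟩
    simp only [IsRawCode, rawCode, Nat.unpair_pair, Int.encode_add_one_div_two]
    exact ⟨q.den_nz, q.reduced⟩

theorem primrecPred_isRawCode : PrimrecPred IsRawCode :=
  PrimrecPred.and
    (Primrec.eq.comp (Primrec.snd.comp Primrec.unpair) (Primrec.const 0)).not
    (PrimrecRel.nat_coprime.comp
      (Primrec.nat_div.comp
        (Primrec.succ.comp (Primrec.fst.comp Primrec.unpair)) (Primrec.const 2))
      (Primrec.snd.comp Primrec.unpair))

theorem encode_eq_count_rawCode (q : ℚ) :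
    @encode ℚ instDenumerable.toEncodable q = Nat.count IsRawCode (rawCode q) := by
  change (List.range (rawCode q)).countP
    (fun m => @decide (m ∈ Set.range (@encode ℚ instEncodable)) (decidableRangeEncode ℚ m)) = _
  refine List.countP_congr fun m _ => ?_
  simp only [decide_eq_true_eq]
  exact isRawCode_iff_mem_range.symm

theorem primrec_one_div_natCast_succ : Primrec fun k : ℕ => 1 / ((k : ℚ) + 1) := by
  have hcode (k : ℕ) : rawCode (1 / ((k : ℚ) + 1)) = Nat.pair (encode (1 : ℤ)) (k + 1) := by
    have h := Rat.inv_natCast_num_of_pos k.succ_pos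
    have h' := Rat.inv_natCast_den_of_pos k.succ_pos
    push_cast at h h'
    simp [rawCode, one_div, h, h']
  refine ((Primrec.ofNat ℚ).comp ((Primrec.nat_count_s16 primrecPred_isRawCode).comp
    (Primrec₂.natPair.comp (Primrec.const (encode (1 : ℤ))) Primrec.succ))).of_eq fun k => ?_
  change Denumerable.ofNat ℚ (Nat.count IsRawCode (Nat.pair (encode (1 : ℤ)) (k + 1))) = _
  rw [← hcode, ← encode_eq_count_rawCode, Denumerable.ofNat_encode]

theorem computable_rawCode : Computable rawCode := by
  have hex (q : ℚ) :
      ∃ m, IsRawCode m ∧ Nat.count IsRawCode m = @encode ℚ instDenumerable.toEncodable q :=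
    ⟨rawCode q, isRawCode_iff_mem_range.2 ⟨q, rfl⟩, (encode_eq_count_rawCode q).symm⟩
  refine (Computable.nat_find (p := fun q m =>
    IsRawCode m ∧ Nat.count IsRawCode m = @encode ℚ instDenumerable.toEncodable q)
    ?_ hex).of_eq fun q => ?_
  · exact (PrimrecPred.and (primrecPred_isRawCode.comp Primrec.snd)
      (Primrec.eq.comp ((Primrec.nat_count_s16 primrecPred_isRawCode).comp Primrec.snd)
        (Primrec.encode.comp Primrec.fst))).decide.to_comp
  · obtain ⟨hraw, hcount⟩ := Nat.find_spec (hex q)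
    refine Nat.count_injective hraw (isRawCode_iff_mem_range.2 ⟨q, rfl⟩) ?_
    rw [hcount, encode_eq_count_rawCode]

theorem le_one_div_natCast_succ_iff (q : ℚ) (x : ℕ) :
    q ≤ 1 / ((x : ℚ) + 1) ↔ q.num.toNat * (x + 1) ≤ q.den := by
  have hnum : q ≤ 1 / ((x : ℚ) + 1) ↔ q.num * (x + 1) ≤ q.den := by
    rw [le_div_iff₀ (by positivity)]
    conv_lhs => rw [← Rat.num_div_den q]
    rw [div_mul_eq_mul_div, div_le_one (by positivity)]
    norm_cast
  rw [hnum]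
  rcases le_or_gt q.num 0 with hneg | hpos
  · rw [Int.toNat_of_nonpos hneg, zero_mul]
    simp only [zero_le, iff_true]
    nlinarith
  · zify
    rw [Int.toNat_of_nonneg hpos.le]

theorem computable₂_decide_le_one_div_natCast_succ :
    Computable₂ fun (x : ℕ) (q : ℚ) => decide (q ≤ 1 / ((x : ℚ) + 1)) := by
  have htest : PrimrecRel fun (x m : ℕ) =>
      (if m.unpair.1 % 2 = 0 then m.unpair.1 / 2 else 0) * (x + 1) ≤ m.unpair.2 := by
    have hcode : Primrec fun p : ℕ × ℕ => p.2.unpair.1 :=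
      Primrec.fst.comp (Primrec.unpair.comp Primrec.snd)
    exact Primrec.nat_le.comp (Primrec.nat_mul.comp
      (Primrec.ite
        (Primrec.eq.comp (Primrec.nat_mod.comp hcode (Primrec.const 2)) (Primrec.const 0))
        (Primrec.nat_div.comp hcode (Primrec.const 2)) (Primrec.const 0))
      (Primrec.succ.comp Primrec.fst)) (Primrec.snd.comp (Primrec.unpair.comp Primrec.snd))
  refine (htest.decide.to_comp.comp Computable.fst
    (computable_rawCode.comp Computable.snd)).of_eq fun p => ?_
  simp only [rawCode, Nat.unpair_pair, ← Int.toNat_eq_ite_encode]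
  exact decide_eq_decide.2 (le_one_div_natCast_succ_iff p.2 p.1).symm

end Rat

theorem IsComputableReal.exists_primrec_approximation {α : ℝ} (h : IsComputableReal α) :
    ∃ A E : ℕ → ℚ, Primrec A ∧ Primrec E ∧ Antitone E ∧
      Tendsto (fun x => (E x : ℝ)) atTop (𝓝 0) ∧ ∀ x : ℕ, |(A x : ℝ) - α| ≤ (E x : ℝ) := by
  obtain ⟨A, hA, hbound⟩ := h
  obtain ⟨m, hm, hmono, hlim, hAm⟩ := hA.exists_primrec_comp_tendsto_atTop
  refine ⟨A ∘ m, fun s => 1 / ((m s : ℚ) + 1), hAm, Rat.primrec_one_div_natCast_succ.comp hm,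
    fun s t hst => ?_, ?_, fun s => ?_⟩
  · change 1 / ((m t : ℚ) + 1) ≤ 1 / ((m s : ℚ) + 1)
    gcongr
    exact hmono hst
  · exact (tendsto_one_div_add_atTop_nhds_zero_nat.comp hlim).congr fun s => by simp
  · simpa using hbound (m s)

theorem isComputableReal_of_computable_approximation {α : ℝ} {A E : ℕ → ℚ} (hA : Computable A)
    (hE : Computable E) (hlim : Tendsto (fun x => (E x : ℝ)) atTop (𝓝 0))
    (hbound : ∀ x : ℕ, |(A x : ℝ) - α| ≤ (E x : ℝ)) : IsComputableReal α := by
  have hreach (x : ℕ) : ∃ n, E n ≤ 1 / ((x : ℚ) + 1) := by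
    have hpos : (0 : ℝ) < 1 / ((x : ℝ) + 1) := by positivity
    obtain ⟨n, hn⟩ := (hlim.eventually_lt_const hpos).exists
    refine ⟨n, (Rat.cast_le (K := ℝ)).1 ?_⟩
    push_cast
    exact hn.le
  refine ⟨fun x => A (Nat.find (hreach x)), hA.comp (Computable.nat_find ?_ hreach), fun x => ?_⟩
  · exact Rat.computable₂_decide_le_one_div_natCast_succ.comp Computable.fst
      (hE.comp Computable.snd)
  · calc |(A (Nat.find (hreach x)) : ℝ) - α| ≤ E (Nat.find (hreach x)) := hbound _
      _ ≤ 1 / ((x : ℝ) + 1) := by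
        have := Rat.cast_le (K := ℝ).2 (Nat.find_spec (hreach x))
        push_cast at this
        exact this

theorem computableReal_iff_primrec_approximation (α : ℝ) :
    IsComputableReal α ↔
      ∃ A E : ℕ → ℚ, Primrec A ∧ Primrec E ∧ Antitone E ∧
        Filter.Tendsto (fun x => (E x : ℝ)) Filter.atTop (nhds 0) ∧
        ∀ x : ℕ, |(A x : ℝ) - α| ≤ (E x : ℝ) :=
  ⟨IsComputableReal.exists_primrec_approximation, fun ⟨_, _, hA, hE, _, hlim, hbound⟩ =>
    isComputableReal_of_computable_approximation hA.to_comp hE.to_comp hlim hbound⟩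
end
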